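/- Let G^h, K^h ∈ L²(Ω, ℝ^{3×3}) with K^h skew-symmetric almost everywhere, limsup_{h→0}(‖G^h‖_{L²} + ‖K^h‖_{L⁴}) < ∞, and set E^h := (√((Id + hK^h + h²G^h)ᵀ(Id + hK^h + h²G^h)) − Id)/h². Then there exist measurable sets S^h ⊂ Ω with |Ω∖S^h| → 0 such that, with χ^h the indicator of S^h, lim_{h→0} ‖χ^h·(E^h − (sym G^h − ½(K^h)²))‖_{L²} = 0. -/

import Mathlib

open Matrix MeasureTheory Filter
open scoped ENNReal Topology

noncomputable def frob {m : Type*} [Fintype m] (A : Matrix m m ℝ) : ℝ :=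
  Real.sqrt (∑ i, ∑ j, (A i j) ^ 2)

noncomputable def symPart {m : Type*} [Fintype m] (A : Matrix m m ℝ) : Matrix m m ℝ :=
  (1 / 2 : ℝ) • (A + Aᵀ)

/-- The positive semidefinite square root, as `Matrix.PosSemidef.sqrt` was defined in Mathlib
(Dec 2024); it has since been removed. -/
noncomputable def Matrix.PosSemidef.sqrt {n 𝕜 : Type*} [Fintype n] [RCLike 𝕜] [DecidableEq n]
    [PartialOrder 𝕜] {A : Matrix n n 𝕜} (hA : A.PosSemidef) : Matrix n n 𝕜 :=
  hA.1.eigenvectorUnitary.1 * diagonal ((↑) ∘ (√·) ∘ hA.1.eigenvalues) *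
  (star hA.1.eigenvectorUnitary : Matrix n n 𝕜)

/-- The strain `E^h = (√((I+hK+h²G)ᵀ(I+hK+h²G)) − I)/h²`. -/
noncomputable def strainE (h : ℝ) (K G : Matrix (Fin 3) (Fin 3) ℝ) :
    Matrix (Fin 3) (Fin 3) ℝ :=
  (1 / h ^ 2 : ℝ) •
    ((Matrix.posSemidef_conjTranspose_mul_self (1 + h • K + (h ^ 2 : ℝ) • G)).sqrt - 1)


/-
With `F = 1 + hK + h²G` and `K` skew, `FᵀF - 1 = 2h²(sym G - K²/2) + R` where
`R = h³(GᵀK - KG) + h⁴GᵀG`. Writing `D = √(FᵀF) - 1`, the identity `D² + 2D = FᵀF - 1` gives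
`2h²(E - (sym G - K²/2)) = R - D²`, and diagonalising `FᵀF` gives `|D| ≤ |FᵀF - 1|`. Where
`h(|G| + |K|²) ≤ 1`, both `R` and `D²` are `O(h^{5/2}(|G| + |K|²))`, so `E` is within
`17√h(|G| + |K|²)` of `sym G - K²/2`. Since `|G| + |K|²` is bounded in `L²`, Chebyshev's
inequality bounds the measure of the remaining set by `O(h²)`.
-/

section Frobenius

variable {n : Type*} [Fintype n]

lemma frob_nonneg (A : Matrix n n ℝ) : 0 ≤ frob A :=
  Real.sqrt_nonneg _

lemma continuous_frob : Continuous (frob : Matrix n n ℝ → ℝ) := by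
  unfold frob
  fun_prop

lemma frob_eq_sqrt_trace (A : Matrix n n ℝ) : frob A = √(trace (star A * A)) := by
  rw [frob, trace, Finset.sum_comm]
  simp [Matrix.mul_apply, sq]

variable [DecidableEq n]

lemma frob_diagonal (v : n → ℝ) : frob (diagonal v) = √(∑ i, v i ^ 2) := by
  simp [frob, diagonal_apply, ite_pow]

lemma frob_conjStarAlgAut (u : unitary (Matrix n n ℝ)) (A : Matrix n n ℝ) :
    frob (Unitary.conjStarAlgAut ℝ _ u A) = frob A := by
  rw [frob_eq_sqrt_trace, frob_eq_sqrt_trace, ← map_star, ← map_mul,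
    Unitary.conjStarAlgAut_apply, trace_mul_cycle, ← Matrix.mul_assoc, Unitary.coe_star_mul_self,
    Matrix.one_mul]

end Frobenius

namespace Matrix.PosSemidef

variable {n : Type*} [Fintype n] [DecidableEq n] {A : Matrix n n ℝ} (hA : A.PosSemidef)

lemma sqrt_eq_conjStarAlgAut_diagonal :
    hA.sqrt = Unitary.conjStarAlgAut ℝ _ hA.1.eigenvectorUnitary
      (diagonal fun i => √(hA.1.eigenvalues i)) :=
  rfl

lemma sqrt_mul_self : hA.sqrt * hA.sqrt = A := by
  conv_rhs => rw [hA.1.spectral_theorem]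
  rw [sqrt_eq_conjStarAlgAut_diagonal, ← map_mul, diagonal_mul_diagonal]
  simp_rw [Real.mul_self_sqrt (hA.eigenvalues_nonneg _)]
  rfl

lemma sqrt_sub_one_mul_self_add :
    (hA.sqrt - 1) * (hA.sqrt - 1) + (2 : ℝ) • (hA.sqrt - 1) = A - 1 := by
  conv_rhs => rw [← hA.sqrt_mul_self]
  rw [two_smul]
  noncomm_ring

lemma frob_sqrt_sub_one_le : frob (hA.sqrt - 1) ≤ frob (A - 1) := by
  conv_rhs => rw [hA.1.spectral_theorem]
  rw [sqrt_eq_conjStarAlgAut_diagonal,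
    ← map_one (Unitary.conjStarAlgAut ℝ _ hA.1.eigenvectorUnitary),
    ← map_sub, ← map_sub, frob_conjStarAlgAut, frob_conjStarAlgAut, ← diagonal_one,
    diagonal_sub, diagonal_sub, frob_diagonal, frob_diagonal]
  refine Real.sqrt_le_sqrt (Finset.sum_le_sum fun i _ => ?_)
  show (√(hA.1.eigenvalues i) - 1) ^ 2 ≤ (hA.1.eigenvalues i - 1) ^ 2
  -- `|√λ - 1| ≤ |√λ - 1| (√λ + 1) = |λ - 1|`
  have hs := Real.sqrt_nonneg (hA.1.eigenvalues i)
  have hss := Real.sq_sqrt (hA.eigenvalues_nonneg i)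
  nlinarith [sq_nonneg (√(hA.1.eigenvalues i) - 1)]

end Matrix.PosSemidef

section CauchyGreen

attribute [local instance] Matrix.frobeniusNormedAddCommGroup Matrix.frobeniusNormSMulClass

variable {n : Type*} [Fintype n] {h : ℝ} {K G : Matrix n n ℝ}

lemma frob_eq_norm (A : Matrix n n ℝ) : frob A = ‖A‖ := by
  simp [frob, Matrix.frobenius_norm_def, Real.sqrt_eq_rpow]

lemma norm_symPart_sub_le : ‖symPart G - (1 / 2 : ℝ) • (K * K)‖ ≤ ‖G‖ + ‖K‖ ^ 2 / 2 := by
  calc ‖symPart G - (1 / 2 : ℝ) • (K * K)‖ ≤ (1 / 2) * (‖G‖ + ‖Gᵀ‖) + (1 / 2) * ‖K * K‖ := by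
        refine (norm_sub_le _ _).trans ?_
        simp only [symPart, norm_smul, Real.norm_eq_abs, abs_of_pos (one_half_pos (α := ℝ))]
        gcongr
        exact norm_add_le _ _
    _ ≤ (1 / 2) * (‖G‖ + ‖G‖) + (1 / 2) * (‖K‖ * ‖K‖) := by
        rw [frobenius_norm_transpose]
        gcongr
        exact frobenius_norm_mul _ _
    _ = ‖G‖ + ‖K‖ ^ 2 / 2 := by ring

noncomputable def cauchyGreenRemainder (h : ℝ) (K G : Matrix n n ℝ) : Matrix n n ℝ :=
  h ^ 3 • (Gᵀ * K - K * G) + h ^ 4 • (Gᵀ * G)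

lemma norm_cauchyGreenRemainder_le (h0 : 0 < h) (h1 : h ≤ 1) (hGh : h * ‖G‖ ≤ 1)
    (hKh : h * ‖K‖ ^ 2 ≤ 1) : ‖cauchyGreenRemainder h K G‖ ≤ 3 * h ^ 2 * √h * ‖G‖ := by
  have hb := norm_nonneg G
  have hs : √h ^ 2 = h := Real.sq_sqrt h0.le
  have hhs : h ≤ √h := by nlinarith [Real.sqrt_le_one.2 h1, Real.sqrt_nonneg h]
  have hKG : h ^ 3 * ‖K‖ * ‖G‖ ≤ h ^ 2 * √h * ‖G‖ := by
    have hks : h * ‖K‖ ≤ √h := by nlinarith [norm_nonneg K, Real.sqrt_nonneg h]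
    have := mul_le_mul_of_nonneg_left hks (by positivity : 0 ≤ h ^ 2 * ‖G‖)
    linarith
  have hGG : h ^ 4 * ‖G‖ ^ 2 ≤ h ^ 2 * √h * ‖G‖ := by
    have := mul_le_mul_of_nonneg_left hGh (by positivity : 0 ≤ h ^ 3 * ‖G‖)
    have := mul_le_mul_of_nonneg_left hhs (by positivity : 0 ≤ h ^ 2 * ‖G‖)
    nlinarith
  calc _ ≤ h ^ 3 * (‖Gᵀ‖ * ‖K‖ + ‖K‖ * ‖G‖) + h ^ 4 * (‖Gᵀ‖ * ‖G‖) := by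
        refine (norm_add_le _ _).trans ?_
        simp only [norm_smul, Real.norm_eq_abs, abs_of_nonneg (pow_nonneg h0.le _)]
        gcongr
        · exact (norm_sub_le _ _).trans
            (add_le_add (frobenius_norm_mul _ _) (frobenius_norm_mul _ _))
        · exact frobenius_norm_mul _ _
    _ = 2 * (h ^ 3 * ‖K‖ * ‖G‖) + h ^ 4 * ‖G‖ ^ 2 := by rw [frobenius_norm_transpose]; ring
    _ ≤ 3 * h ^ 2 * √h * ‖G‖ := by linarith

variable [DecidableEq n]

lemma conjTranspose_mul_self_sub_one (hK : Kᵀ = -K) :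
    (1 + h • K + h ^ 2 • G)ᴴ * (1 + h • K + h ^ 2 • G) - 1 =
      (2 * h ^ 2) • (symPart G - (1 / 2 : ℝ) • (K * K)) + cauchyGreenRemainder h K G := by
  simp only [cauchyGreenRemainder, conjTranspose_eq_transpose_of_trivial, symPart,
    transpose_add, transpose_smul, transpose_one, hK, add_mul, mul_add, smul_mul_assoc,
    mul_smul_comm, one_mul, mul_one, neg_mul, smul_neg]
  module

lemma norm_conjTranspose_mul_self_sub_one_le (hK : Kᵀ = -K) :
    ‖(1 + h • K + h ^ 2 • G)ᴴ * (1 + h • K + h ^ 2 • G) - 1‖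
      ≤ h ^ 2 * (2 * ‖G‖ + ‖K‖ ^ 2) + ‖cauchyGreenRemainder h K G‖ := by
  rw [conjTranspose_mul_self_sub_one hK]
  refine (norm_add_le _ _).trans (add_le_add ?_ le_rfl)
  rw [norm_smul, Real.norm_of_nonneg (by positivity : (0 : ℝ) ≤ 2 * h ^ 2)]
  nlinarith [norm_symPart_sub_le (G := G) (K := K)]

end CauchyGreen

section Strain

attribute [local instance] Matrix.frobeniusNormedAddCommGroup Matrix.frobeniusNormSMulClass

noncomputable def rightStretch (h : ℝ) (K G : Matrix (Fin 3) (Fin 3) ℝ) :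
    Matrix (Fin 3) (Fin 3) ℝ :=
  (posSemidef_conjTranspose_mul_self (1 + h • K + (h ^ 2 : ℝ) • G)).sqrt

variable {h : ℝ} {K G : Matrix (Fin 3) (Fin 3) ℝ}

lemma strainE_eq : strainE h K G = (1 / h ^ 2 : ℝ) • (rightStretch h K G - 1) := rfl

lemma smul_strainE_sub_eq (hh : h ≠ 0) (hK : Kᵀ = -K) :
    (2 * h ^ 2) • (strainE h K G - (symPart G - (1 / 2 : ℝ) • (K * K))) =
      cauchyGreenRemainder h K G - (rightStretch h K G - 1) * (rightStretch h K G - 1) := by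
  have key : (rightStretch h K G - 1) * (rightStretch h K G - 1)
        + (2 : ℝ) • (rightStretch h K G - 1)
      = (1 + h • K + h ^ 2 • G)ᴴ * (1 + h • K + h ^ 2 • G) - 1 :=
    (posSemidef_conjTranspose_mul_self _).sqrt_sub_one_mul_self_add
  rw [conjTranspose_mul_self_sub_one hK] at key
  rw [strainE_eq, smul_sub, smul_smul, show 2 * h ^ 2 * (1 / h ^ 2) = 2 by field_simp]
  linear_combination (norm := module) key

lemma frob_strainE_sub_le (h0 : 0 < h) (h1 : h ≤ 1) (hK : Kᵀ = -K)
    (hGK : h * (frob G + frob K ^ 2) ≤ 1) :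
    frob (strainE h K G - (symPart G - (1 / 2 : ℝ) • (K * K)))
      ≤ 17 * √h * (frob G + frob K ^ 2) := by
  simp only [frob_eq_norm] at *
  set D := rightStretch h K G - 1
  set R := cauchyGreenRemainder h K G
  set P := (1 + h • K + h ^ 2 • G)ᴴ * (1 + h • K + h ^ 2 • G)
  set s := √h
  have hs1 : s ≤ 1 := Real.sqrt_le_one.2 h1
  have hhs : h ≤ s := by nlinarith [Real.sq_sqrt h0.le, Real.sqrt_nonneg h]
  have hGh : h * ‖G‖ ≤ 1 := by nlinarith [norm_nonneg K]
  have hKh : h * ‖K‖ ^ 2 ≤ 1 := by nlinarith [norm_nonneg G]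
  have hR := norm_cauchyGreenRemainder_le h0 h1 hGh hKh
  have hP : ‖P - 1‖ ≤ h ^ 2 * (2 * ‖G‖ + ‖K‖ ^ 2) + 3 * h ^ 2 * s * ‖G‖ :=
    (norm_conjTranspose_mul_self_sub_one_le hK).trans (add_le_add le_rfl hR)
  have hP6 : ‖P - 1‖ ≤ 6 * h := by
    have := mul_le_mul_of_nonneg_left hGh (by positivity : 0 ≤ h * (2 + 3 * s))
    have := mul_le_mul_of_nonneg_left hKh h0.le
    have := mul_le_mul_of_nonneg_left hs1 (by positivity : 0 ≤ 3 * h)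
    nlinarith
  have hD : ‖D‖ ≤ ‖P - 1‖ := by
    have := (posSemidef_conjTranspose_mul_self (1 + h • K + h ^ 2 • G)).frob_sqrt_sub_one_le
    rwa [frob_eq_norm, frob_eq_norm] at this
  have hDD : ‖D * D‖ ≤ 6 * h * ‖P - 1‖ :=
    calc ‖D * D‖ ≤ ‖D‖ * ‖D‖ := frobenius_norm_mul _ _
      _ ≤ ‖P - 1‖ * ‖P - 1‖ := mul_self_le_mul_self (norm_nonneg _) hD
      _ ≤ 6 * h * ‖P - 1‖ := mul_le_mul_of_nonneg_right hP6 (norm_nonneg _)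
  have hE : 2 * h ^ 2 * ‖strainE h K G - (symPart G - (1 / 2 : ℝ) • (K * K))‖
      ≤ ‖R‖ + ‖D * D‖ := by
    rw [← Real.norm_of_nonneg (by positivity : 0 ≤ 2 * h ^ 2), ← norm_smul,
      smul_strainE_sub_eq h0.ne' hK]
    exact norm_sub_le _ _
  have hsum : ‖R‖ + ‖D * D‖ ≤ 2 * h ^ 2 * (17 * s * (‖G‖ + ‖K‖ ^ 2)) := by
    have := mul_le_mul_of_nonneg_left hP (by positivity : 0 ≤ 6 * h)
    have := mul_le_mul_of_nonneg_right hhs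
      (by positivity : 0 ≤ h ^ 2 * (12 * ‖G‖ + 6 * ‖K‖ ^ 2))
    have := mul_le_mul_of_nonneg_right h1 (by positivity : 0 ≤ 18 * h ^ 2 * s * ‖G‖)
    have : 0 ≤ h ^ 2 * s * ‖G‖ := by positivity
    have : 0 ≤ h ^ 2 * s * ‖K‖ ^ 2 := by positivity
    linarith
  exact le_of_mul_le_mul_left (hE.trans hsum) (by positivity)

end Strain

section Measure

variable {ι α : Type*} [MeasurableSpace α] {μ : Measure α} {l : Filter ι} {p : ℝ≥0∞} {C : ℝ≥0∞}

lemma eLpNorm_sq (f : α → ℝ) : eLpNorm (fun x => f x ^ 2) p μ = eLpNorm f (p * 2) μ ^ 2 := by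
  have := eLpNorm_norm_rpow f (p := p) (μ := μ) two_pos
  simp only [Real.norm_eq_abs, Real.rpow_two, sq_abs, ENNReal.ofReal_ofNat] at this
  rw [this, ENNReal.rpow_two]

lemma measure_one_lt_mul_le (hp0 : p ≠ 0) (hp : p ≠ ∞) {f : α → ℝ}
    (hf : AEStronglyMeasurable f μ) {a : ℝ} (ha : 0 < a) :
    μ {x | 1 < a * f x} ≤ ENNReal.ofReal a ^ p.toReal * eLpNorm f p μ ^ p.toReal := by
  have hsub : {x | 1 < a * f x} ⊆ {x | ENNReal.ofReal a⁻¹ ≤ ‖f x‖ₑ} := fun x hx => by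
    have hfx : a⁻¹ < f x := by rwa [inv_lt_iff_one_lt_mul₀' ha]
    rw [Set.mem_ofPred_eq, Real.enorm_eq_ofReal_abs]
    exact ENNReal.ofReal_le_ofReal (hfx.le.trans (le_abs_self _))
  refine (measure_mono hsub).trans ?_
  simpa only [ENNReal.ofReal_inv_of_pos ha, inv_inv] using
    meas_ge_le_mul_pow_eLpNorm_enorm μ hp0 hp hf (ENNReal.ofReal_pos.2 (inv_pos.2 ha)).ne' (by simp)

lemma tendsto_measure_one_lt_mul (hp0 : p ≠ 0) (hp : p ≠ ∞) {f : ι → α → ℝ}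
    (hf : ∀ i, AEStronglyMeasurable (f i) μ) (hC : C ≠ ∞) (hfC : ∀ᶠ i in l, eLpNorm (f i) p μ ≤ C)
    {a : ι → ℝ} (ha : Tendsto a l (𝓝[>] 0)) :
    Tendsto (fun i => μ {x | 1 < a i * f i x}) l (𝓝 0) := by
  have hp' : 0 < p.toReal := ENNReal.toReal_pos hp0 hp
  have hlim : Tendsto (fun i => ENNReal.ofReal (a i) ^ p.toReal * C ^ p.toReal) l (𝓝 0) := by
    have h0 : Tendsto (fun i => ENNReal.ofReal (a i) ^ p.toReal) l (𝓝 0) := by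
      have := (((ENNReal.continuous_rpow_const (y := p.toReal)).comp
        ENNReal.continuous_ofReal).tendsto 0).comp (tendsto_nhdsWithin_iff.1 ha).1
      simpa [Function.comp_def, hp'] using this
    simpa using ENNReal.Tendsto.mul_const h0 (Or.inr (ENNReal.rpow_ne_top_of_nonneg hp'.le hC))
  refine tendsto_of_tendsto_of_tendsto_of_le_of_le' tendsto_const_nhds hlim
    (Eventually.of_forall fun _ => zero_le) ?_
  filter_upwards [hfC, (tendsto_nhdsWithin_iff.1 ha).2] with i hi hai
  exact (measure_one_lt_mul_le hp0 hp (hf i) hai).trans (by gcongr)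

lemma tendsto_eLpNorm_of_norm_le_mul {E : Type*} [NormedAddCommGroup E] {F : ι → α → E}
    {g : ι → α → ℝ} {c : ι → ℝ} (hc : Tendsto c l (𝓝 0))
    (hFg : ∀ᶠ i in l, ∀ᵐ x ∂μ, ‖F i x‖ ≤ c i * g i x) (hC : C ≠ ∞)
    (hgC : ∀ᶠ i in l, eLpNorm (g i) p μ ≤ C) :
    Tendsto (fun i => eLpNorm (F i) p μ) l (𝓝 0) := by
  have hlim : Tendsto (fun i => ‖c i‖ₑ * C) l (𝓝 0) := by
    simpa using ENNReal.Tendsto.mul_const (continuous_enorm.tendsto' 0 0 enorm_zero |>.comp hc)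
      (Or.inr hC)
  refine tendsto_of_tendsto_of_tendsto_of_le_of_le' tendsto_const_nhds hlim
    (Eventually.of_forall fun _ => zero_le) ?_
  filter_upwards [hFg, hgC] with i hi hgi
  calc eLpNorm (F i) p μ ≤ eLpNorm (c i • g i) p μ := eLpNorm_mono_ae_real hi
    _ = ‖c i‖ₑ * eLpNorm (g i) p μ := eLpNorm_const_smul _ _ _ _
    _ ≤ ‖c i‖ₑ * C := by gcongr

lemma exists_measurableSet_subset_measure_diff_eq {Ω s : Set α} (hΩ : MeasurableSet Ω)
    (hs : NullMeasurableSet s (μ.restrict Ω)) :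
    ∃ t ⊆ Ω ∩ s, MeasurableSet t ∧ μ (Ω \ t) = μ.restrict Ω sᶜ := by
  obtain ⟨t, hts, ht, hteq⟩ := (hΩ.nullMeasurableSet.inter hs).exists_measurable_subset_ae_eq
  refine ⟨t, hts, ht, ?_⟩
  have hΩs : (Ω ∩ s : Set α) =ᵐ[μ.restrict Ω] s := by
    filter_upwards [ae_restrict_mem hΩ] with x hx using propext (and_iff_right hx)
  rw [Set.sdiff_eq_compl_inter, ← Measure.restrict_apply ht.compl]
  exact measure_congr (hteq.trans hΩs).compl

lemma exists_measurableSet_tendsto_measure_diff {Ω : Set α} (hΩ : MeasurableSet Ω)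
    (hp0 : p ≠ 0) (hp : p ≠ ∞) {f : ι → α → ℝ} (hf : ∀ i, AEStronglyMeasurable (f i) (μ.restrict Ω))
    (hC : C ≠ ∞) (hfC : ∀ᶠ i in l, eLpNorm (f i) p (μ.restrict Ω) ≤ C)
    {a : ι → ℝ} (ha : Tendsto a l (𝓝[>] 0)) :
    ∃ S : ι → Set α, (∀ i, MeasurableSet (S i) ∧ S i ⊆ Ω) ∧ (∀ i, ∀ x ∈ S i, a i * f i x ≤ 1) ∧
      Tendsto (fun i => μ (Ω \ S i)) l (𝓝 0) := by
  choose S hSsub hSmeas hSdiff using fun i => exists_measurableSet_subset_measure_diff_eq hΩ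
    (((hf i).const_mul (a i)).nullMeasurableSet_le aestronglyMeasurable_const)
  refine ⟨S, fun i => ⟨hSmeas i, (hSsub i).trans Set.inter_subset_left⟩,
    fun i x hx => (hSsub i hx).2, ?_⟩
  simp only [hSdiff, Set.compl_ofPred, not_le]
  exact tendsto_measure_one_lt_mul hp0 hp hf hC hfC ha

end Measure

theorem stmt9_general
    (Ω : Set (Fin 3 → ℝ)) (hΩopen : IsOpen Ω)
    (G K : ℝ → (Fin 3 → ℝ) → Matrix (Fin 3) (Fin 3) ℝ)
    (hmeas : ∀ h, AEStronglyMeasurable (fun x => G h x) (volume.restrict Ω) ∧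
      AEStronglyMeasurable (fun x => K h x) (volume.restrict Ω))
    (hskew : ∀ h > (0:ℝ), ∀ᵐ x ∂(volume.restrict Ω), (K h x)ᵀ = -(K h x))
    (hbdd : ∃ C : ℝ≥0∞, C < ⊤ ∧ ∀ᶠ h in nhdsWithin 0 (Set.Ioi 0),
      eLpNorm (fun x => frob (G h x)) 2 (volume.restrict Ω)
        + eLpNorm (fun x => frob (K h x)) 4 (volume.restrict Ω) ≤ C) :
    ∃ S : ℝ → Set (Fin 3 → ℝ),
      (∀ h, MeasurableSet (S h) ∧ S h ⊆ Ω) ∧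
      Tendsto (fun h => volume (Ω \ S h)) (nhdsWithin 0 (Set.Ioi 0)) (nhds 0) ∧
      Tendsto
        (fun h => eLpNorm
          ((S h).indicator fun x =>
            frob (strainE h (K h x) (G h x)
              - (symPart (G h x) - (1 / 2 : ℝ) • (K h x * K h x))))
          2 (volume.restrict Ω))
        (nhdsWithin 0 (Set.Ioi 0)) (nhds 0) := by
  obtain ⟨C, hC, hGK⟩ := hbdd
  have hG (h : ℝ) : AEStronglyMeasurable (fun x => frob (G h x)) (volume.restrict Ω) :=
    continuous_frob.comp_aestronglyMeasurable (hmeas h).1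
  have hK (h : ℝ) : AEStronglyMeasurable (fun x => frob (K h x) ^ 2) (volume.restrict Ω) :=
    (continuous_frob.pow 2).comp_aestronglyMeasurable (hmeas h).2
  have hbound : ∀ᶠ h in 𝓝[>] 0, eLpNorm (fun x => frob (G h x) + frob (K h x) ^ 2) 2
      (volume.restrict Ω) ≤ C + C ^ 2 := by
    filter_upwards [hGK] with h hh
    refine (eLpNorm_add_le (hG h) (hK h) one_le_two).trans (add_le_add ?_ ?_)
    · exact le_self_add.trans hh
    · rw [eLpNorm_sq, show (2 : ℝ≥0∞) * 2 = 4 by norm_num]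
      gcongr
      exact le_add_self.trans hh
  have hCfin : C + C ^ 2 ≠ ∞ := ENNReal.add_ne_top.2 ⟨hC.ne, ENNReal.pow_ne_top hC.ne⟩
  obtain ⟨S, hS, hSbound, hSlim⟩ := exists_measurableSet_tendsto_measure_diff
    hΩopen.measurableSet two_ne_zero ENNReal.ofNat_ne_top (fun h => (hG h).add (hK h)) hCfin
    hbound tendsto_id
  refine ⟨S, hS, hSlim, tendsto_eLpNorm_of_norm_le_mul (c := fun h => 17 * √h) ?_ ?_ hCfin hbound⟩
  · exact ((continuous_const.mul Real.continuous_sqrt).tendsto' 0 0 (by simp)).mono_left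
      nhdsWithin_le_nhds
  · filter_upwards [Ioo_mem_nhdsGT one_pos] with h ⟨h0, h1⟩
    filter_upwards [hskew h h0] with x hx
    by_cases hxS : x ∈ S h
    · rw [Set.indicator_of_mem hxS, Real.norm_of_nonneg (frob_nonneg _)]
      exact frob_strainE_sub_le h0 h1.le hx (hSbound h x hxS)
    · rw [Set.indicator_of_notMem hxS, norm_zero]
      exact mul_nonneg (by positivity) (add_nonneg (frob_nonneg _) (sq_nonneg _))

/-- with `K^h` skew and bounds on `‖G^h‖_{L²}`, `‖K^h‖_{L⁴}`, there are sets
`S^h` with `|Ω∖S^h| → 0` on which `E^h` is `L²`-close to `sym G^h − ½(K^h)²`. -/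
theorem stmt9
    (Ω : Set (Fin 3 → ℝ)) (hΩopen : IsOpen Ω) (hΩbdd : Bornology.IsBounded Ω)
    (G K : ℝ → (Fin 3 → ℝ) → Matrix (Fin 3) (Fin 3) ℝ)
    (hmeas : ∀ h, AEStronglyMeasurable (fun x => G h x) (volume.restrict Ω) ∧
      AEStronglyMeasurable (fun x => K h x) (volume.restrict Ω))
    (hskew : ∀ h > (0:ℝ), ∀ᵐ x ∂(volume.restrict Ω), (K h x)ᵀ = -(K h x))
    (hbdd : ∃ C : ℝ≥0∞, C < ⊤ ∧ ∀ᶠ h in nhdsWithin 0 (Set.Ioi 0),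
      eLpNorm (fun x => frob (G h x)) 2 (volume.restrict Ω)
        + eLpNorm (fun x => frob (K h x)) 4 (volume.restrict Ω) ≤ C) :
    ∃ S : ℝ → Set (Fin 3 → ℝ),
      (∀ h, MeasurableSet (S h) ∧ S h ⊆ Ω) ∧
      Tendsto (fun h => volume (Ω \ S h)) (nhdsWithin 0 (Set.Ioi 0)) (nhds 0) ∧
      Tendsto
        (fun h => eLpNorm
          ((S h).indicator fun x =>
            frob (strainE h (K h x) (G h x)
              - (symPart (G h x) - (1 / 2 : ℝ) • (K h x * K h x))))
          2 (volume.restrict Ω))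
        (nhdsWithin 0 (Set.Ioi 0)) (nhds 0) :=
  stmt9_general Ω hΩopen G K hmeas hskew hbdd
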